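/- arXiv:1710.11408 — 6 statements merged into one kernel-verified Lean document; each statement's English description precedes it below -/
import Mathlib

section
/- With t₀ < t_m, boundary data L, v⁰, v_srz, and p* the cubic satisfying those boundary conditions, if f : [t₀,t_m] → ℝ is C², satisfies the same boundary conditions, and ∫_{t₀}^{t_m} (f''(t))² dt = ∫_{t₀}^{t_m} (p*''(t))² dt, then f(t) = p*(t) for all t ∈ [t₀,t_m]; that is, the cubic is the unique minimizer of the control-effort cost among admissible trajectories. -/
/-!
Write `f = p* + g`. Then `g` and `g'` vanish at both endpoints, and `p*'' = a t + b` is affine, so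
integrating by parts twice kills the cross term: `∫ (a t + b) g'' = [(a t + b) g' - a g] = 0`.
Hence `∫ (f'')² = ∫ (p*'')² + ∫ (g'')²`, equal cost forces `∫ (g'')² = 0`, so the continuous `g''`
vanishes on `[t₀, tm]`, and the zero initial data give `g = 0`.
-/

open MeasureTheory Set intervalIntegral

section Calculus

variable {g g' g'' : ℝ → ℝ} {a b : ℝ}

theorem hasDerivAt_cubic (α β γ δ t : ℝ) :
    HasDerivAt (fun t => (1/6) * α * t^3 + (1/2) * β * t^2 + γ * t + δ)
      ((1/2) * α * t^2 + β * t + γ) t := by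
  have h := ((((hasDerivAt_pow 3 t).const_mul ((1/6) * α)).add
    ((hasDerivAt_pow 2 t).const_mul ((1/2) * β))).add
    ((hasDerivAt_id' t).const_mul γ)).add_const δ
  exact h.congr_deriv (by norm_num; ring)

theorem hasDerivAt_quadratic (α β γ t : ℝ) :
    HasDerivAt (fun t => (1/2) * α * t^2 + β * t + γ) (α * t + β) t := by
  have h := (((hasDerivAt_pow 2 t).const_mul ((1/2) * α)).add
    ((hasDerivAt_id' t).const_mul β)).add_const γ
  exact h.congr_deriv (by norm_num; ring)

theorem eqOn_zero_of_integral_sq_eq_zero {q : ℝ → ℝ} (hab : a < b)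
    (hq : ContinuousOn q (Icc a b)) (h : ∫ t in a..b, q t ^ 2 = 0) : EqOn q 0 (Icc a b) := by
  rw [integral_eq_zero_iff_of_le_of_nonneg_ae hab.le (ae_of_all _ fun t => sq_nonneg (q t))
    ((hq.pow 2).intervalIntegrable_of_Icc hab.le)] at h
  have hae : q =ᵐ[volume.restrict (Icc a b)] 0 := by
    rw [Measure.restrict_congr_set Ioc_ae_eq_Icc.symm]
    filter_upwards [h] with t ht
    exact pow_eq_zero_iff two_ne_zero |>.mp ht
  exact Measure.eqOn_of_ae_eq hae hq continuousOn_const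
    (by rw [interior_Icc, closure_Ioo hab.ne])

theorem integral_add_sq_of_integral_mul_eq_zero {u q : ℝ → ℝ} (hab : a ≤ b)
    (hu : ContinuousOn u (Icc a b)) (hq : ContinuousOn q (Icc a b))
    (h : ∫ t in a..b, u t * q t = 0) :
    ∫ t in a..b, (u t + q t) ^ 2 = (∫ t in a..b, u t ^ 2) + ∫ t in a..b, q t ^ 2 := by
  have hu2 : IntervalIntegrable (fun t => u t ^ 2) volume a b :=
    (hu.pow 2).intervalIntegrable_of_Icc hab
  have hq2 : IntervalIntegrable (fun t => q t ^ 2) volume a b :=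
    (hq.pow 2).intervalIntegrable_of_Icc hab
  have huq : IntervalIntegrable (fun t => 2 * (u t * q t)) volume a b :=
    ((hu.mul hq).const_smul (2 : ℝ)).intervalIntegrable_of_Icc hab
  have hexpand : ∀ t, (u t + q t) ^ 2 = (u t ^ 2 + 2 * (u t * q t)) + q t ^ 2 := fun t => by ring
  simp only [hexpand]
  rw [integral_add (hu2.add huq) hq2, integral_add hu2 huq, intervalIntegral.integral_const_mul, h]
  ring

theorem apply_eq_left_of_hasDerivAt_eqOn_zero (hg : ∀ t ∈ Icc a b, HasDerivAt g (g' t) t)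
    (hg' : EqOn g' 0 (Icc a b)) : ∀ t ∈ Icc a b, g t = g a :=
  constant_of_has_deriv_right_zero (fun t ht => (hg t ht).continuousAt.continuousWithinAt)
    fun t ht => ((hg t (Ico_subset_Icc_self ht)).hasDerivWithinAt).congr_deriv
      (hg' (Ico_subset_Icc_self ht))

variable (hg : ∀ t ∈ Icc a b, HasDerivAt g (g' t) t)
    (hg' : ∀ t ∈ Icc a b, HasDerivAt g' (g'' t) t)
include hg hg'

theorem integral_affine_mul_eq_zero (hab : a ≤ b) (hg'' : ContinuousOn g'' (Icc a b))
    (ha : g a = 0) (hb : g b = 0) (ha' : g' a = 0) (hb' : g' b = 0) (α β : ℝ) :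
    ∫ t in a..b, (α * t + β) * g'' t = 0 := by
  have hderiv : ∀ t ∈ uIcc a b,
      HasDerivAt (fun t => (α * t + β) * g' t - α * g t) ((α * t + β) * g'' t) t := by
    intro t ht
    rw [uIcc_of_le hab] at ht
    have h := ((((hasDerivAt_id' t).const_mul α).add_const β).mul (hg' t ht)).sub
      ((hg t ht).const_mul α)
    exact h.congr_deriv (by ring)
  have hcont : ContinuousOn (fun t => (α * t + β) * g'' t) (Icc a b) := by fun_prop
  rw [integral_eq_sub_of_hasDerivAt hderiv (hcont.intervalIntegrable_of_Icc hab)]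
  simp [ha, hb, ha', hb']

theorem eqOn_zero_of_second_deriv_eqOn_zero (hg'' : EqOn g'' 0 (Icc a b))
    (ha : g a = 0) (ha' : g' a = 0) : EqOn g 0 (Icc a b) := by
  have hg'0 : EqOn g' 0 (Icc a b) := fun t ht => by
    rw [apply_eq_left_of_hasDerivAt_eqOn_zero hg' hg'' t ht, ha', Pi.zero_apply]
  exact fun t ht => by rw [apply_eq_left_of_hasDerivAt_eqOn_zero hg hg'0 t ht, ha, Pi.zero_apply]

theorem eqOn_zero_of_integral_affine_add_sq_eq (hab : a < b) (hg'' : ContinuousOn g'' (Icc a b))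
    (ha : g a = 0) (hb : g b = 0) (ha' : g' a = 0) (hb' : g' b = 0) (α β : ℝ)
    (hcost : ∫ t in a..b, (α * t + β + g'' t) ^ 2 = ∫ t in a..b, (α * t + β) ^ 2) :
    EqOn g 0 (Icc a b) := by
  have hcross := integral_affine_mul_eq_zero hg hg' hab.le hg'' ha hb ha' hb' α β
  have haff : ContinuousOn (fun t : ℝ => α * t + β) (Icc a b) := by fun_prop
  rw [integral_add_sq_of_integral_mul_eq_zero hab.le haff hg'' hcross, add_eq_left] at hcost
  exact eqOn_zero_of_second_deriv_eqOn_zero hg hg'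
    (eqOn_zero_of_integral_sq_eq_zero hab hg'' hcost) ha ha'

end Calculus

/-- The cubic `p* t = (1/6) a t³ + (1/2) b t² + c t + d` satisfying the boundary
conditions is the *unique* minimizer of the control effort: if an admissible C²
trajectory `f` with the same boundary conditions achieves the same cost
`∫ (f'')² = ∫ (p*'')²`, then `f` coincides with the cubic on `[t₀, tm]`. -/
theorem cubic_unique_minimizer_of_control_effort
    (t₀ tm L v0 vsrz a b c d : ℝ) (hlt : t₀ < tm)
    (hp0 : (1/6) * a * t₀^3 + (1/2) * b * t₀^2 + c * t₀ + d = 0)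
    (hp1 : (1/6) * a * tm^3 + (1/2) * b * tm^2 + c * tm + d = L)
    (hv0 : (1/2) * a * t₀^2 + b * t₀ + c = v0)
    (hv1 : (1/2) * a * tm^2 + b * tm + c = vsrz)
    (f f' f'' : ℝ → ℝ)
    (hd1 : ∀ t ∈ Set.Icc t₀ tm, HasDerivAt f (f' t) t)
    (hd2 : ∀ t ∈ Set.Icc t₀ tm, HasDerivAt f' (f'' t) t)
    (hcont : ContinuousOn f'' (Set.Icc t₀ tm))
    (hf0 : f t₀ = 0) (hf1 : f tm = L)
    (hfv0 : f' t₀ = v0) (hfv1 : f' tm = vsrz)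
    (hcost : ∫ t in t₀..tm, (f'' t)^2 = ∫ t in t₀..tm, (a * t + b)^2) :
    ∀ t ∈ Set.Icc t₀ tm,
      f t = (1/6) * a * t^3 + (1/2) * b * t^2 + c * t + d := by
  have hg := fun t (ht : t ∈ Icc t₀ tm) => (hd1 t ht).sub (hasDerivAt_cubic a b c d t)
  have hg' := fun t (ht : t ∈ Icc t₀ tm) => (hd2 t ht).sub (hasDerivAt_quadratic a b c t)
  have hcost' : ∫ t in t₀..tm, (a * t + b + (f'' t - (a * t + b))) ^ 2
      = ∫ t in t₀..tm, (a * t + b) ^ 2 := by simpa only [add_sub_cancel] using hcost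
  have hzero := eqOn_zero_of_integral_affine_add_sq_eq hg hg' hlt
    (hcont.sub (by fun_prop)) (by simp only [Pi.sub_apply, hf0, hp0, sub_self])
    (by simp only [Pi.sub_apply, hf1, hp1, sub_self]) (by simp only [hfv0, hv0, sub_self])
    (by simp only [hfv1, hv1, sub_self]) a b hcost'
  exact fun t ht => sub_eq_zero.mp (hzero ht)
end

section
/- Let (x,y) : ℝ → ℝ² be a differentiable solution of the straight-road lane-tracking vector field, i.e. x'(t) = dX + p(x₀ − x − s·dX) and y'(t) = dY + p(y₀ − y − s·dY) with s = (x₀−x)dX + (y₀−y)dY, where dX² + dY² = 1. Then the signed perpendicular distance η(t) = −(x(t)−x₀)dY + (y(t)−y₀)dX satisfies η'(t) = −p·η(t) for all t. -/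
theorem HasDerivAt.signed_distance_to_line {𝕜 : Type*} [NontriviallyNormedField 𝕜]
    {x y : 𝕜 → 𝕜} {x' y' x₀ y₀ dX dY t : 𝕜}
    (hx : HasDerivAt x x' t) (hy : HasDerivAt y y' t) :
    HasDerivAt (fun s => -(x s - x₀) * dY + (y s - y₀) * dX) (-x' * dY + y' * dX) t :=
  ((hx.sub_const x₀).neg.mul_const dY).add ((hy.sub_const y₀).mul_const dX)

theorem straight_lane_perpendicular_error_ode_general
    (x₀ y₀ dX dY p : ℝ)
    (x y : ℝ → ℝ)
    (hx : ∀ t, HasDerivAt x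
      (dX + p * (x₀ - x t - ((x₀ - x t) * dX + (y₀ - y t) * dY) * dX)) t)
    (hy : ∀ t, HasDerivAt y
      (dY + p * (y₀ - y t - ((x₀ - x t) * dX + (y₀ - y t) * dY) * dY)) t) :
    ∀ t, HasDerivAt (fun s => -(x s - x₀) * dY + (y s - y₀) * dX)
      (-p * (-(x t - x₀) * dY + (y t - y₀) * dX)) t := fun t =>
  -- crossing with `d` kills both tangential terms `d` and `s • d` of the velocity
  ((hx t).signed_distance_to_line (hy t)).congr_deriv (by ring)

/-- Along any differentiable solution of the straight-road lane-tracking vector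
field (anchor `(x₀, y₀)`, unit direction `(dX, dY)`, gain `p`), the signed
perpendicular distance `η t = -(x t - x₀) * dY + (y t - y₀) * dX` satisfies
`η' = -p * η`. -/
theorem straight_lane_perpendicular_error_ode
    (x₀ y₀ dX dY p : ℝ) (hunit : dX^2 + dY^2 = 1)
    (x y : ℝ → ℝ)
    (hx : ∀ t, HasDerivAt x
      (dX + p * (x₀ - x t - ((x₀ - x t) * dX + (y₀ - y t) * dY) * dX)) t)
    (hy : ∀ t, HasDerivAt y
      (dY + p * (y₀ - y t - ((x₀ - x t) * dX + (y₀ - y t) * dY) * dY)) t) :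
    ∀ t, HasDerivAt (fun s => -(x s - x₀) * dY + (y s - y₀) * dX)
      (-p * (-(x t - x₀) * dY + (y t - y₀) * dX)) t :=
  straight_lane_perpendicular_error_ode_general x₀ y₀ dX dY p x y hx hy
end

section
/- Let (x,y) : ℝ → ℝ² be a differentiable solution of the straight-road lane-tracking vector field defined for all t ≥ 0, with gain p > 0. Then the signed perpendicular distance satisfies η(t) = η(0)·e^{−p t} for all t ≥ 0; in particular η(t) → 0 as t → ∞, so the trajectory converges to the road's center line, and larger values of p give faster exponential convergence. -/
/-! The perpendicular distance `η` obeys the scalar linear equation `η' = -p η`: the drift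
`(dX, dY)` and the correction term `-p s (dX, dY)` are parallel to the road, so the normal
`(-dY, dX)` annihilates them. Hence `η t * exp (p t)` has zero derivative and is constant. -/

open Filter Real Set Topology

theorem eq_mul_exp_of_hasDerivAt_mul_self {f : ℝ → ℝ} {c a : ℝ}
    (hf : ∀ t ∈ Ici a, HasDerivAt f (c * f t) t) :
    ∀ t ∈ Ici a, f t = f a * exp (c * (t - a)) := by
  set g : ℝ → ℝ := fun s => f s * exp (-(c * (s - a)))
  have hg : ∀ s ∈ Ici a, HasDerivAt g 0 s := by
    intro s hs
    have hexp := (((hasDerivAt_id s).sub_const a).const_mul c).neg.exp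
    exact ((hf s hs).mul hexp).congr_deriv (by ring)
  intro t ht
  have hconst : g t = g a :=
    constant_of_has_deriv_right_zero
      (fun s hs => (hg s hs.1).continuousAt.continuousWithinAt)
      (fun s hs => (hg s hs.1).hasDerivWithinAt) t ⟨ht, le_rfl⟩
  simp only [g, sub_self, mul_zero, neg_zero, exp_zero, mul_one] at hconst
  rw [← hconst, mul_assoc, ← exp_add, neg_add_cancel, exp_zero, mul_one]

theorem tendsto_mul_exp_neg_mul_atTop_nhds_zero (b : ℝ) {p : ℝ} (hp : 0 < p) :
    Tendsto (fun t => b * exp (-p * t)) atTop (𝓝 0) := by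
  have hexp : Tendsto (fun t => exp (-p * t)) atTop (𝓝 0) :=
    tendsto_exp_comp_nhds_zero.mpr (tendsto_id.const_mul_atTop_of_neg (neg_neg_of_pos hp))
  simpa using hexp.const_mul b

theorem hasDerivAt_lane_perpendicular_error {x₀ y₀ dX dY p : ℝ} {x y : ℝ → ℝ} {t : ℝ}
    (hx : HasDerivAt x (dX + p * (x₀ - x t - ((x₀ - x t) * dX + (y₀ - y t) * dY) * dX)) t)
    (hy : HasDerivAt y (dY + p * (y₀ - y t - ((x₀ - x t) * dX + (y₀ - y t) * dY) * dY)) t) :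
    HasDerivAt (fun t => -(x t - x₀) * dY + (y t - y₀) * dX)
      (-p * (-(x t - x₀) * dY + (y t - y₀) * dX)) t := by
  have h := ((hx.sub_const x₀).neg.mul_const dY).add ((hy.sub_const y₀).mul_const dX)
  exact h.congr_deriv (by ring)

theorem straight_lane_perpendicular_error_exponential_decay_general
    (x₀ y₀ dX dY p : ℝ) (hp : 0 < p)
    (x y : ℝ → ℝ)
    (hx : ∀ t ∈ Set.Ici (0:ℝ), HasDerivAt x
      (dX + p * (x₀ - x t - ((x₀ - x t) * dX + (y₀ - y t) * dY) * dX)) t)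
    (hy : ∀ t ∈ Set.Ici (0:ℝ), HasDerivAt y
      (dY + p * (y₀ - y t - ((x₀ - x t) * dX + (y₀ - y t) * dY) * dY)) t) :
    (∀ t ∈ Set.Ici (0:ℝ),
      -(x t - x₀) * dY + (y t - y₀) * dX
        = (-(x 0 - x₀) * dY + (y 0 - y₀) * dX) * Real.exp (-p * t)) ∧
    Filter.Tendsto (fun t => -(x t - x₀) * dY + (y t - y₀) * dX)
      Filter.atTop (nhds 0) := by
  have hdecay : ∀ t ∈ Ici (0:ℝ), -(x t - x₀) * dY + (y t - y₀) * dX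
      = (-(x 0 - x₀) * dY + (y 0 - y₀) * dX) * exp (-p * t) := by
    simpa only [sub_zero] using eq_mul_exp_of_hasDerivAt_mul_self
      (fun t ht => hasDerivAt_lane_perpendicular_error (hx t ht) (hy t ht))
  refine ⟨hdecay, ?_⟩
  refine (tendsto_mul_exp_neg_mul_atTop_nhds_zero (-(x 0 - x₀) * dY + (y 0 - y₀) * dX) hp).congr' ?_
  filter_upwards [eventually_ge_atTop 0] with t ht
  exact (hdecay t ht).symm

/-- For a solution of the straight-road lane-tracking vector field defined for all
`t ≥ 0` with gain `p > 0`, the signed perpendicular distance decays exponentially: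
`η t = η 0 * exp (-p * t)` for all `t ≥ 0`, and in particular `η t → 0` as
`t → ∞`, so the trajectory converges to the road's center line (larger `p`
giving a faster exponential rate `exp (-p * t)`). -/
theorem straight_lane_perpendicular_error_exponential_decay
    (x₀ y₀ dX dY p : ℝ) (hunit : dX^2 + dY^2 = 1) (hp : 0 < p)
    (x y : ℝ → ℝ)
    (hx : ∀ t ∈ Set.Ici (0:ℝ), HasDerivAt x
      (dX + p * (x₀ - x t - ((x₀ - x t) * dX + (y₀ - y t) * dY) * dX)) t)
    (hy : ∀ t ∈ Set.Ici (0:ℝ), HasDerivAt y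
      (dY + p * (y₀ - y t - ((x₀ - x t) * dX + (y₀ - y t) * dY) * dY)) t) :
    (∀ t ∈ Set.Ici (0:ℝ),
      -(x t - x₀) * dY + (y t - y₀) * dX
        = (-(x 0 - x₀) * dY + (y 0 - y₀) * dX) * Real.exp (-p * t)) ∧
    Filter.Tendsto (fun t => -(x t - x₀) * dY + (y t - y₀) * dX)
      Filter.atTop (nhds 0) :=
  straight_lane_perpendicular_error_exponential_decay_general x₀ y₀ dX dY p hp x y hx hy
end

section
/- Let (x,y) : ℝ → ℝ² be a differentiable solution of the straight-road lane-tracking vector field whose initial point lies on the road's center line, i.e. η(0) = 0. Then for all t, (x'(t), y'(t)) = (dX, dY); consequently x(t) = x(0) + t·dX and y(t) = y(0) + t·dY, so the trajectory moves along the center line at unit speed in the direction of the road. -/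
/-!
Using `dX² + dY² = 1`, the correction term of the vector field is `(p dY η, -p dX η)`:
perpendicular to the road and proportional to the offset `η`. Hence `η' = -p η`, so
`η t = exp (-p t) η 0 = 0`, and the field reduces to the constant velocity `(dX, dY)`.
-/

section ConstantCoefficientODE

variable {E : Type*} [NormedAddCommGroup E] [NormedSpace ℝ E]

theorem eq_add_smul_of_hasDerivAt_const {f : ℝ → E} {a : E} (hf : ∀ t, HasDerivAt f a t)
    (t : ℝ) : f t = f 0 + t • a := by
  have hg : ∀ s, HasDerivAt (fun s => f s - s • a) 0 s := fun s =>
    ((hf s).sub ((hasDerivAt_id' s).smul_const a)).congr_deriv (by rw [one_smul, sub_self])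
  have := is_const_of_deriv_eq_zero (fun s => (hg s).differentiableAt) (fun s => (hg s).deriv) t 0
  simp only [zero_smul, sub_zero] at this
  rw [← this, sub_add_cancel]

theorem eq_exp_smul_of_hasDerivAt_smul_self {f : ℝ → E} {c : ℝ}
    (hf : ∀ t, HasDerivAt f (c • f t) t) (t : ℝ) : f t = Real.exp (c * t) • f 0 := by
  have hexp : ∀ s, HasDerivAt (fun s => Real.exp (-(c * s))) (-c * Real.exp (-(c * s))) s :=
    fun s => by simpa [mul_comm] using ((hasDerivAt_id s).const_mul c).neg.exp
  have hg : ∀ s, HasDerivAt (fun s => Real.exp (-(c * s)) • f s) 0 s := fun s =>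
    ((hexp s).smul (hf s)).congr_deriv <| by
      rw [smul_smul, ← add_smul, mul_comm, neg_mul, add_neg_cancel, zero_smul]
  have := is_const_of_deriv_eq_zero (fun s => (hg s).differentiableAt) (fun s => (hg s).deriv) t 0
  simp only [mul_zero, neg_zero, Real.exp_zero, one_smul] at this
  rw [← this, smul_smul, ← Real.exp_add, add_neg_cancel, Real.exp_zero, one_smul]

end ConstantCoefficientODE

section StraightLane

variable (x₀ y₀ dX dY : ℝ)

def laneOffset (x y : ℝ) : ℝ := -(x - x₀) * dY + (y - y₀) * dX

variable {x₀ y₀ dX dY}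

theorem lane_correction_fst (hunit : dX ^ 2 + dY ^ 2 = 1) (x y : ℝ) :
    x₀ - x - ((x₀ - x) * dX + (y₀ - y) * dY) * dX = dY * laneOffset x₀ y₀ dX dY x y := by
  unfold laneOffset
  linear_combination (x - x₀) * hunit

theorem lane_correction_snd (hunit : dX ^ 2 + dY ^ 2 = 1) (x y : ℝ) :
    y₀ - y - ((x₀ - x) * dX + (y₀ - y) * dY) * dY = -dX * laneOffset x₀ y₀ dX dY x y := by
  unfold laneOffset
  linear_combination (y - y₀) * hunit

theorem hasDerivAt_laneOffset {p : ℝ} {x y : ℝ → ℝ} {t : ℝ}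
    (hx : HasDerivAt x (dX + p * (dY * laneOffset x₀ y₀ dX dY (x t) (y t))) t)
    (hy : HasDerivAt y (dY + p * (-dX * laneOffset x₀ y₀ dX dY (x t) (y t))) t)
    (hunit : dX ^ 2 + dY ^ 2 = 1) :
    HasDerivAt (fun t => laneOffset x₀ y₀ dX dY (x t) (y t))
      (-p * laneOffset x₀ y₀ dX dY (x t) (y t)) t := by
  refine (((hx.sub_const x₀).neg.mul_const dY).add
    ((hy.sub_const y₀).mul_const dX)).congr_deriv ?_
  linear_combination (-p * laneOffset x₀ y₀ dX dY (x t) (y t)) * hunit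

end StraightLane

/-- If a differentiable solution of the straight-road lane-tracking vector field
starts on the road's center line (`η 0 = 0`), then for all `t` its velocity is
exactly the unit road direction `(dX, dY)`, and hence
`x t = x 0 + t * dX` and `y t = y 0 + t * dY`: the trajectory moves along the
center line at unit speed in the direction of the road. -/
theorem straight_lane_on_centerline_moves_along_road
    (x₀ y₀ dX dY p : ℝ) (hunit : dX^2 + dY^2 = 1)
    (x y : ℝ → ℝ)
    (hx : ∀ t, HasDerivAt x
      (dX + p * (x₀ - x t - ((x₀ - x t) * dX + (y₀ - y t) * dY) * dX)) t)
    (hy : ∀ t, HasDerivAt y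
      (dY + p * (y₀ - y t - ((x₀ - x t) * dX + (y₀ - y t) * dY) * dY)) t)
    (h0 : -(x 0 - x₀) * dY + (y 0 - y₀) * dX = 0) :
    ∀ t, HasDerivAt x dX t ∧ HasDerivAt y dY t ∧
      x t = x 0 + t * dX ∧ y t = y 0 + t * dY := by
  set η := fun t => laneOffset x₀ y₀ dX dY (x t) (y t)
  have hx' : ∀ t, HasDerivAt x (dX + p * (dY * η t)) t := fun t => by
    simpa only [lane_correction_fst hunit] using hx t
  have hy' : ∀ t, HasDerivAt y (dY + p * (-dX * η t)) t := fun t => by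
    simpa only [lane_correction_snd hunit] using hy t
  have hη : ∀ t, η t = 0 := fun t =>
    (eq_exp_smul_of_hasDerivAt_smul_self (f := η)
      (fun s => hasDerivAt_laneOffset (hx' s) (hy' s) hunit) t).trans (smul_eq_zero_of_right _ h0)
  have hxd : ∀ t, HasDerivAt x dX t := fun t => by simpa [hη] using hx' t
  have hyd : ∀ t, HasDerivAt y dY t := fun t => by simpa [hη] using hy' t
  exact fun t => ⟨hxd t, hyd t, eq_add_smul_of_hasDerivAt_const hxd t,
    eq_add_smul_of_hasDerivAt_const hyd t⟩
end

section
/- Let (x,y) : ℝ → ℝ² be a differentiable solution of the arc lane-tracking vector field whose initial point lies on the circle, i.e. (x(0)−x_c)² + (y(0)−y_c)² = r². Then (x(t)−x_c)² + (y(t)−y_c)² = r² for all t (the circle is invariant), and along the circle the speed is constant: (x'(t))² + (y'(t))² = r⁴ for all t. -/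
/-!
The radial error `ρ = (x - x_c)² + (y - y_c)² - r²` satisfies the linear equation
`ρ' = -8p((x - x_c)² + (y - y_c)²) ρ`, because the rotational part of the field is tangent to
the circles around `(x_c, y_c)`. For any linear equation `ρ' = c ρ` with continuous `c`, the
integrating factor `exp (-∫ c)` makes `ρ exp (-∫ c)` constant, so `ρ` stays `0`
once it starts at `0`. On the circle the gradient part vanishes, so the velocity is the rotation
field alone.
-/

open Real

section LinearScalarODE

variable {f c : ℝ → ℝ}

theorem mul_exp_neg_integral_eq_of_hasDerivAt_mul (hc : Continuous c)
    (hf : ∀ t, HasDerivAt f (c t * f t) t) (a t : ℝ) :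
    f t * exp (-∫ s in a..t, c s) = f a := by
  have hC (t : ℝ) : HasDerivAt (fun t => ∫ s in a..t, c s) (c t) t :=
    hc.integral_hasStrictDerivAt a t |>.hasDerivAt
  have hconst (t : ℝ) : HasDerivAt (fun t => f t * exp (-∫ s in a..t, c s)) 0 t :=
    ((hf t).mul (hC t).neg.exp).congr_deriv (by ring)
  simpa using is_const_of_deriv_eq_zero (fun s => (hconst s).differentiableAt)
    (fun s => (hconst s).deriv) t a

theorem eq_zero_of_hasDerivAt_mul (hc : Continuous c) (hf : ∀ t, HasDerivAt f (c t * f t) t)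
    {a : ℝ} (ha : f a = 0) (t : ℝ) : f t = 0 := by
  have h := mul_exp_neg_integral_eq_of_hasDerivAt_mul hc hf a t
  rw [ha] at h
  exact (mul_eq_zero.mp h).resolve_right (exp_ne_zero _)

end LinearScalarODE

def radialError (xc yc r x y : ℝ) : ℝ := (x - xc) ^ 2 + (y - yc) ^ 2 - r ^ 2

theorem hasDerivAt_radialError {xc yc r cw p : ℝ} {x y : ℝ → ℝ} {t : ℝ}
    (hx : HasDerivAt x
      (r * (y t - yc) * cw - 4 * p * (x t - xc) * radialError xc yc r (x t) (y t)) t)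
    (hy : HasDerivAt y
      (-(r * (x t - xc) * cw) - 4 * p * (y t - yc) * radialError xc yc r (x t) (y t)) t) :
    HasDerivAt (fun t => radialError xc yc r (x t) (y t))
      (-8 * p * ((x t - xc) ^ 2 + (y t - yc) ^ 2) * radialError xc yc r (x t) (y t)) t := by
  refine (((hx.sub_const xc).pow 2).add ((hy.sub_const yc).pow 2)).sub_const (r ^ 2)
    |>.congr_deriv ?_
  unfold radialError
  ring

theorem arc_rotation_sq_add_sq {xc yc r cw x y : ℝ} (hcw : cw = 1 ∨ cw = -1)
    (hcirc : (x - xc) ^ 2 + (y - yc) ^ 2 = r ^ 2) :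
    (r * (y - yc) * cw) ^ 2 + (-(r * (x - xc) * cw)) ^ 2 = r ^ 4 := by
  have hcw2 : cw ^ 2 = 1 := by rcases hcw with rfl | rfl <;> norm_num
  linear_combination (r ^ 2 * cw ^ 2) * hcirc + r ^ 4 * hcw2

theorem arc_lane_circle_invariant_and_constant_speed_general
    (xc yc r cw p : ℝ) (hcw : cw = 1 ∨ cw = -1)
    (x y : ℝ → ℝ)
    (hx : ∀ t, HasDerivAt x
      (r * (y t - yc) * cw
        - 4 * p * (x t - xc) * ((x t - xc)^2 + (y t - yc)^2 - r^2)) t)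
    (hy : ∀ t, HasDerivAt y
      (-(r * (x t - xc) * cw)
        - 4 * p * (y t - yc) * ((x t - xc)^2 + (y t - yc)^2 - r^2)) t)
    (h0 : (x 0 - xc)^2 + (y 0 - yc)^2 = r^2) :
    ∀ t, (x t - xc)^2 + (y t - yc)^2 = r^2 ∧
      (deriv x t)^2 + (deriv y t)^2 = r^4 := by
  have hxc : Continuous x := continuous_iff_continuousAt.2 fun t => (hx t).continuousAt
  have hyc : Continuous y := continuous_iff_continuousAt.2 fun t => (hy t).continuousAt
  have hρ : ∀ t, radialError xc yc r (x t) (y t) = 0 :=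
    eq_zero_of_hasDerivAt_mul (by fun_prop) (fun t => hasDerivAt_radialError (hx t) (hy t))
      (a := 0) (by simp [radialError, h0])
  intro t
  have hcirc : (x t - xc)^2 + (y t - yc)^2 = r^2 := sub_eq_zero.mp (hρ t)
  refine ⟨hcirc, ?_⟩
  rw [(hx t).deriv, (hy t).deriv, hcirc]
  simp only [sub_self, mul_zero, sub_zero]
  exact arc_rotation_sq_add_sq hcw hcirc

/-- If a differentiable solution of the arc lane-tracking vector field starts on
the target circle, then it stays on the circle for all time (the circle is
invariant), and along the circle the speed is constant:
`(x' t)² + (y' t)² = r⁴`. -/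
theorem arc_lane_circle_invariant_and_constant_speed
    (xc yc r cw p : ℝ) (hr : 0 < r) (hcw : cw = 1 ∨ cw = -1)
    (x y : ℝ → ℝ)
    (hx : ∀ t, HasDerivAt x
      (r * (y t - yc) * cw
        - 4 * p * (x t - xc) * ((x t - xc)^2 + (y t - yc)^2 - r^2)) t)
    (hy : ∀ t, HasDerivAt y
      (-(r * (x t - xc) * cw)
        - 4 * p * (y t - yc) * ((x t - xc)^2 + (y t - yc)^2 - r^2)) t)
    (h0 : (x 0 - xc)^2 + (y 0 - yc)^2 = r^2) :
    ∀ t, (x t - xc)^2 + (y t - yc)^2 = r^2 ∧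
      (deriv x t)^2 + (deriv y t)^2 = r^4 :=
  arc_lane_circle_invariant_and_constant_speed_general xc yc r cw p hcw x y hx hy h0
end

section
/- Let (x,y) : [0,∞) → ℝ² be a differentiable solution of the arc lane-tracking vector field with gain p > 0, defined for all t ≥ 0, whose initial point is not the center of the circle, i.e. (x(0),y(0)) ≠ (x_c,y_c). Then ρ(t) → 0 as t → ∞; that is, the distance from (x(t),y(t)) to the center (x_c,y_c) converges to the target radius r. -/
/-!
Writing `s = (x - xc)² + (y - yc)²`, the rotational part of the field is tangent to circles about
the center, so `s` alone obeys the logistic equation `s' = -8p s (s - r²)`. As `1 / s` solves a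
linear equation, the solutions are explicit:
`(s t - r²) (s 0 e^{8pr²t} - (s 0 - r²)) = (s 0 - r²) r²`. This division-free form is verified
directly: the difference of its two sides solves a linear equation and vanishes at `0`, hence
everywhere by Grönwall. When `s 0 > 0` the second factor grows like `e^{8pr²t}`, forcing
`s t - r² → 0`.
-/

open Set Filter Topology

theorem eq_zero_of_hasDerivAt_eq_smul_self {E : Type*} [NormedAddCommGroup E] [NormedSpace ℝ E]
    {f : ℝ → E} {c : ℝ → ℝ} {t₀ : ℝ} (hc : ContinuousOn c (Ici t₀))
    (hf : ∀ t ∈ Ici t₀, HasDerivAt f (c t • f t) t) (hf₀ : f t₀ = 0) :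
    ∀ t ∈ Ici t₀, f t = 0 := by
  intro t ht
  obtain ⟨C, hC⟩ := (isCompact_Icc (a := t₀) (b := t)).exists_bound_of_continuousOn
    (hc.mono Icc_subset_Ici_self)
  refine eq_zero_of_abs_deriv_le_mul_abs_self_of_eq_zero_right (K := C)
    (fun u hu => (hf u hu.1).continuousAt.continuousWithinAt)
    (fun u hu => (hf u hu.1).hasDerivWithinAt) hf₀ (fun u hu => ?_) t ⟨ht, le_rfl⟩
  rw [norm_smul]
  exact mul_le_mul_of_nonneg_right (hC u (Ico_subset_Icc_self hu)) (norm_nonneg _)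

section Logistic

variable {s : ℝ → ℝ} {a b : ℝ}

theorem logistic_closed_form (hs : ∀ t ∈ Ici (0 : ℝ), HasDerivAt s (-a * s t * (s t - b)) t) :
    ∀ t ∈ Ici (0 : ℝ),
      (s t - b) * (s 0 * Real.exp (a * b * t) - (s 0 - b)) = (s 0 - b) * b := by
  set R : ℝ → ℝ := fun t => (s t - b) * (s 0 * Real.exp (a * b * t) - (s 0 - b)) - (s 0 - b) * b
  have hR : ∀ t ∈ Ici (0 : ℝ), HasDerivAt R (-a * (s t - b) * R t) t := by
    intro t ht
    have hexp : HasDerivAt (fun t => Real.exp (a * b * t)) (Real.exp (a * b * t) * (a * b)) t := by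
      simpa using ((hasDerivAt_id t).const_mul (a * b)).exp
    refine ((((hs t ht).sub_const b).mul ((hexp.const_mul (s 0)).sub_const (s 0 - b))).sub_const
      ((s 0 - b) * b)).congr_deriv ?_
    simp only [R]
    ring
  have hcoeff : ContinuousOn (fun t => -a * (s t - b)) (Ici 0) := fun t ht =>
    (continuousAt_const.mul ((hs t ht).continuousAt.sub_const b)).continuousWithinAt
  intro t ht
  exact sub_eq_zero.1 <| eq_zero_of_hasDerivAt_eq_smul_self hcoeff
    (fun t ht => by rw [smul_eq_mul]; exact hR t ht)
    (by simp only [R, mul_zero, Real.exp_zero, mul_one]; ring) t ht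

theorem tendsto_of_hasDerivAt_logistic (ha : 0 < a) (hb : 0 < b) (hs₀ : 0 < s 0)
    (hs : ∀ t ∈ Ici (0 : ℝ), HasDerivAt s (-a * s t * (s t - b)) t) :
    Tendsto s atTop (𝓝 b) := by
  set D : ℝ → ℝ := fun t => s 0 * Real.exp (a * b * t) - (s 0 - b)
  have hD : Tendsto D atTop atTop := by
    refine tendsto_atTop_add_const_right _ _ (Tendsto.const_mul_atTop hs₀ ?_)
    exact Real.tendsto_exp_atTop.comp (tendsto_id.const_mul_atTop (mul_pos ha hb))
  have hD_pos : ∀ t ∈ Ici (0 : ℝ), 0 < D t := fun t ht => by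
    have : 1 ≤ Real.exp (a * b * t) := Real.one_le_exp (mul_nonneg (mul_pos ha hb).le ht)
    nlinarith
  have hρ : (fun t => (s 0 - b) * b / D t) =ᶠ[atTop] fun t => s t - b := by
    filter_upwards [eventually_ge_atTop 0] with t ht
    rw [div_eq_iff (hD_pos t ht).ne', logistic_closed_form hs t ht]
  exact tendsto_sub_nhds_zero_iff.1 ((tendsto_const_nhds.div_atTop hD).congr' hρ)

end Logistic

theorem hasDerivAt_sq_dist_of_arc_lane {x y : ℝ → ℝ} {xc yc r cw p t : ℝ}
    (hx : HasDerivAt x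
      (r * (y t - yc) * cw - 4 * p * (x t - xc) * ((x t - xc)^2 + (y t - yc)^2 - r^2)) t)
    (hy : HasDerivAt y
      (-(r * (x t - xc) * cw) - 4 * p * (y t - yc) * ((x t - xc)^2 + (y t - yc)^2 - r^2)) t) :
    HasDerivAt (fun t => (x t - xc)^2 + (y t - yc)^2)
      (-(8 * p) * ((x t - xc)^2 + (y t - yc)^2) * ((x t - xc)^2 + (y t - yc)^2 - r^2)) t := by
  refine (((hx.sub_const xc).pow 2).add ((hy.sub_const yc).pow 2)).congr_deriv ?_
  push_cast
  ring

theorem arc_lane_radial_error_tendsto_zero_general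
    (xc yc r cw p : ℝ) (hr : 0 < r) (hp : 0 < p)
    (x y : ℝ → ℝ)
    (hx : ∀ t ∈ Set.Ici (0:ℝ), HasDerivAt x
      (r * (y t - yc) * cw
        - 4 * p * (x t - xc) * ((x t - xc)^2 + (y t - yc)^2 - r^2)) t)
    (hy : ∀ t ∈ Set.Ici (0:ℝ), HasDerivAt y
      (-(r * (x t - xc) * cw)
        - 4 * p * (y t - yc) * ((x t - xc)^2 + (y t - yc)^2 - r^2)) t)
    (h0 : (x 0, y 0) ≠ (xc, yc)) :
    Filter.Tendsto (fun t => (x t - xc)^2 + (y t - yc)^2 - r^2)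
      Filter.atTop (nhds 0) := by
  have hs₀ : 0 < (x 0 - xc)^2 + (y 0 - yc)^2 := by
    rcases not_and_or.1 (mt Prod.ext_iff.2 h0) with hxc | hyc
    · have := sq_pos_of_ne_zero (sub_ne_zero.2 hxc); positivity
    · have := sq_pos_of_ne_zero (sub_ne_zero.2 hyc); positivity
  exact tendsto_sub_nhds_zero_iff.2 <| tendsto_of_hasDerivAt_logistic (by positivity)
    (by positivity) hs₀ fun t ht => hasDerivAt_sq_dist_of_arc_lane (hx t ht) (hy t ht)

/-- For a solution of the arc lane-tracking vector field with gain `p > 0`,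
defined for all `t ≥ 0` and whose initial point is not the center of the circle,
the radial error `ρ t = (x t - xc)² + (y t - yc)² - r²` converges to `0` as
`t → ∞`; that is, the distance from `(x t, y t)` to the center converges to the
target radius `r`. -/
theorem arc_lane_radial_error_tendsto_zero
    (xc yc r cw p : ℝ) (hr : 0 < r) (hcw : cw = 1 ∨ cw = -1) (hp : 0 < p)
    (x y : ℝ → ℝ)
    (hx : ∀ t ∈ Set.Ici (0:ℝ), HasDerivAt x
      (r * (y t - yc) * cw
        - 4 * p * (x t - xc) * ((x t - xc)^2 + (y t - yc)^2 - r^2)) t)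
    (hy : ∀ t ∈ Set.Ici (0:ℝ), HasDerivAt y
      (-(r * (x t - xc) * cw)
        - 4 * p * (y t - yc) * ((x t - xc)^2 + (y t - yc)^2 - r^2)) t)
    (h0 : (x 0, y 0) ≠ (xc, yc)) :
    Filter.Tendsto (fun t => (x t - xc)^2 + (y t - yc)^2 - r^2)
      Filter.atTop (nhds 0) :=
  arc_lane_radial_error_tendsto_zero_general xc yc r cw p hr hp x y hx hy h0
end
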